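/- Let A, B, C, D ∈ M_n(ℝ) be symmetric positive definite matrices such that A commutes with C and B commutes with D. If B − A is positive definite and D − C is positive semidefinite, then √(BD) − √(AC) is positive definite. (Here AC and BD are symmetric positive definite since they are products of commuting symmetric positive definite matrices.) -/

import Mathlib

/-
For commuting positive definite `A` and `C`, the matrix `√(AC)` commutes with `A`, so it solves the
Riccati equation `X A⁻¹ X = C`: it is the geometric mean `A # C`. On positive semidefinite
matrices the map `X ↦ X D⁻¹ X` reflects the order, strictly and non-strictly: after conjugation by
`D^(-1/2)` this is operator monotonicity of the square root, which follows by evaluating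
`S² - T² = S (S - T) + (S - T) T` on an eigenvector of `S - T`. Since `D # A = A # D` solves both
`G D⁻¹ G = A` and `G A⁻¹ G = D`, comparing Riccati equations gives
`√(AC) = A # C ≤ A # D = D # A < D # B = √(BD)`.
-/

open Matrix

noncomputable section

def Matrix.PosSemidef.sqrt {n : Type*} {𝕜 : Type*} [Fintype n] [DecidableEq n] [RCLike 𝕜] [PartialOrder 𝕜]
    {A : Matrix n n 𝕜} (hA : A.PosSemidef) : Matrix n n 𝕜 :=
  hA.1.eigenvectorUnitary.1 * diagonal ((↑) ∘ (√·) ∘ hA.1.eigenvalues) *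
    (star hA.1.eigenvectorUnitary : Matrix n n 𝕜)

open scoped MatrixOrder

namespace Matrix

variable {n : Type*} [Fintype n] [DecidableEq n]

theorem PosSemidef.sqrt_eq_cfcSqrt {A : Matrix n n ℝ} (hA : A.PosSemidef) :
    hA.sqrt = CFC.sqrt A := by
  rw [CFC.sqrt_eq_real_sqrt A hA.nonneg, cfcₙ_eq_cfc, hA.1.cfc_eq]
  rfl

theorem PosDef.cfcSqrt {A : Matrix n n ℝ} (hA : A.PosDef) : (CFC.sqrt A).PosDef :=
  hA.isStrictlyPositive.sqrt.posDef

theorem PosDef.posDef_conjugate_iff {L M : Matrix n n ℝ} (hL : L.PosDef) :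
    (L * M * L).PosDef ↔ M.PosDef := by
  have := hL.isUnit.posDef_star_left_conjugate_iff (x := M)
  rwa [star_eq_conjTranspose, hL.isHermitian.eq] at this

theorem PosDef.posSemidef_conjugate_iff {L M : Matrix n n ℝ} (hL : L.PosDef) :
    (L * M * L).PosSemidef ↔ M.PosSemidef := by
  have := hL.isUnit.posSemidef_star_left_conjugate_iff (x := M)
  rwa [star_eq_conjTranspose, hL.isHermitian.eq] at this

theorem dotProduct_mul_self_sub_mul_self_mulVec_of_eigenvector {S T : Matrix n n ℝ}
    (hST : (S - T).IsHermitian) {v : n → ℝ} {t : ℝ} (hv : (S - T) *ᵥ v = t • v) :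
    v ⬝ᵥ (S * S - T * T) *ᵥ v = t * (v ⬝ᵥ S *ᵥ v + v ⬝ᵥ T *ᵥ v) := by
  have hvt : v ᵥ* (S - T) = t • v := by
    rw [← mulVec_transpose, ← conjTranspose_eq_transpose_of_trivial, hST.eq, hv]
  rw [show S * S - T * T = S * (S - T) + (S - T) * T by noncomm_ring, add_mulVec, dotProduct_add,
    ← mulVec_mulVec, ← mulVec_mulVec, hv, mulVec_smul, dotProduct_mulVec v (S - T), hvt,
    dotProduct_smul, smul_dotProduct, smul_eq_mul, smul_eq_mul, mul_add]

theorem posDef_sub_of_posDef_mul_self_sub_mul_self {S T : Matrix n n ℝ} (hS : S.PosSemidef)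
    (hT : T.PosSemidef) (h : (S * S - T * T).PosDef) : (S - T).PosDef := by
  have hST := hS.isHermitian.sub hT.isHermitian
  refine hST.posDef_iff_eigenvalues_pos.mpr fun i => ?_
  have hv : ⇑(hST.eigenvectorBasis i) ≠ 0 := by
    simpa using hST.eigenvectorBasis.orthonormal.ne_zero i
  set v := ⇑(hST.eigenvectorBasis i)
  have hq := h.dotProduct_mulVec_pos hv
  have hSv := hS.dotProduct_mulVec_nonneg v
  have hTv := hT.dotProduct_mulVec_nonneg v
  rw [star_trivial] at hq hSv hTv
  rw [dotProduct_mul_self_sub_mul_self_mulVec_of_eigenvector hST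
    (hST.mulVec_eigenvectorBasis i)] at hq
  exact pos_of_mul_pos_left hq (add_nonneg hSv hTv)

theorem posSemidef_sub_of_posSemidef_mul_self_sub_mul_self {S T : Matrix n n ℝ}
    (hS : S.PosSemidef) (hT : T.PosSemidef) (h : (S * S - T * T).PosSemidef) :
    (S - T).PosSemidef := by
  have hST := hS.isHermitian.sub hT.isHermitian
  refine hST.posSemidef_iff_eigenvalues_nonneg.mpr fun i => ?_
  have hv : ⇑(hST.eigenvectorBasis i) ≠ 0 := by
    simpa using hST.eigenvectorBasis.orthonormal.ne_zero i
  set v := ⇑(hST.eigenvectorBasis i)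
  set t := hST.eigenvalues i
  have heig : (S - T) *ᵥ v = t • v := hST.mulVec_eigenvectorBasis i
  have hq := h.dotProduct_mulVec_nonneg v
  have hSv := hS.dotProduct_mulVec_nonneg v
  have hTv := hT.dotProduct_mulVec_nonneg v
  rw [star_trivial] at hq hSv hTv
  rw [dotProduct_mul_self_sub_mul_self_mulVec_of_eigenvector hST heig] at hq
  show 0 ≤ t
  by_contra! ht
  -- a negative eigenvalue forces `v` into the kernels of both `S` and `T`
  have hsum : v ⬝ᵥ S *ᵥ v + v ⬝ᵥ T *ᵥ v ≤ 0 := nonpos_of_mul_nonneg_right hq ht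
  have hS0 : S *ᵥ v = 0 := (hS.dotProduct_mulVec_zero_iff v).mp (by rw [star_trivial]; linarith)
  have hT0 : T *ᵥ v = 0 := (hT.dotProduct_mulVec_zero_iff v).mp (by rw [star_trivial]; linarith)
  rw [sub_mulVec, hS0, hT0, sub_zero, eq_comm, smul_eq_zero] at heig
  exact heig.elim ht.ne hv

theorem posDef_sub_of_posDef_mul_inv_mul_sub_mul_inv_mul {D X Y : Matrix n n ℝ} (hD : D.PosDef)
    (hX : X.PosSemidef) (hY : Y.PosSemidef) (h : (Y * D⁻¹ * Y - X * D⁻¹ * X).PosDef) :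
    (Y - X).PosDef := by
  set L := CFC.sqrt D⁻¹
  have hL : L.PosDef := hD.inv.cfcSqrt
  have hLL : L * L = D⁻¹ := CFC.sqrt_mul_sqrt_self _ hD.inv.posSemidef.nonneg
  rw [← hL.posDef_conjugate_iff, mul_sub, sub_mul]
  refine posDef_sub_of_posDef_mul_self_sub_mul_self (hL.posSemidef_conjugate_iff.2 hY)
    (hL.posSemidef_conjugate_iff.2 hX) ?_
  rw [show L * Y * L * (L * Y * L) - L * X * L * (L * X * L) =
    L * (Y * D⁻¹ * Y - X * D⁻¹ * X) * L by rw [← hLL]; noncomm_ring]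
  exact hL.posDef_conjugate_iff.2 h

theorem posSemidef_sub_of_posSemidef_mul_inv_mul_sub_mul_inv_mul {D X Y : Matrix n n ℝ}
    (hD : D.PosDef) (hX : X.PosSemidef) (hY : Y.PosSemidef)
    (h : (Y * D⁻¹ * Y - X * D⁻¹ * X).PosSemidef) : (Y - X).PosSemidef := by
  set L := CFC.sqrt D⁻¹
  have hL : L.PosDef := hD.inv.cfcSqrt
  have hLL : L * L = D⁻¹ := CFC.sqrt_mul_sqrt_self _ hD.inv.posSemidef.nonneg
  rw [← hL.posSemidef_conjugate_iff, mul_sub, sub_mul]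
  refine posSemidef_sub_of_posSemidef_mul_self_sub_mul_self (hL.posSemidef_conjugate_iff.2 hY)
    (hL.posSemidef_conjugate_iff.2 hX) ?_
  rw [show L * Y * L * (L * Y * L) - L * X * L * (L * X * L) =
    L * (Y * D⁻¹ * Y - X * D⁻¹ * X) * L by rw [← hLL]; noncomm_ring]
  exact hL.posSemidef_conjugate_iff.2 h

theorem cfcSqrt_mul_mul_inv_mul_cfcSqrt_mul {A C : Matrix n n ℝ} (hA : IsUnit A)
    (hAC : Commute A C) (hACp : (A * C).PosSemidef) :
    CFC.sqrt (A * C) * A⁻¹ * CFC.sqrt (A * C) = C := by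
  have hdet : IsUnit A.det := (isUnit_iff_isUnit_det A).mp hA
  have hcomm : Commute (A * C) A⁻¹ := by
    rw [commute_iff_eq, ← Matrix.mul_assoc, nonsing_inv_mul _ hdet, Matrix.one_mul, hAC.eq,
      Matrix.mul_assoc, mul_nonsing_inv _ hdet, Matrix.mul_one]
  have hsqrt : Commute (CFC.sqrt (A * C)) A⁻¹ := by
    rw [CFC.sqrt_eq_cfc]
    exact hcomm.cfc_nnreal _
  rw [hsqrt.eq, Matrix.mul_assoc, CFC.sqrt_mul_sqrt_self _ hACp.nonneg, ← Matrix.mul_assoc,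
    nonsing_inv_mul _ hdet, Matrix.one_mul]

theorem mul_inv_mul_eq_of_mul_inv_mul_eq {R : Type*} [CommRing R] {A B G : Matrix n n R}
    (hA : IsUnit A) (hB : IsUnit B) (h : G * A⁻¹ * G = B) : G * B⁻¹ * G = A := by
  have hAdet : IsUnit A.det := (isUnit_iff_isUnit_det A).mp hA
  have hGdet : IsUnit G.det := by
    have := (isUnit_iff_isUnit_det B).mp hB
    rw [← h, det_mul, det_mul] at this
    exact isUnit_of_mul_isUnit_right this
  rw [← h, mul_inv_rev, mul_inv_rev, nonsing_inv_nonsing_inv _ hAdet, ← Matrix.mul_assoc G,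
    mul_nonsing_inv _ hGdet, Matrix.one_mul, Matrix.mul_assoc, nonsing_inv_mul _ hGdet,
    Matrix.mul_one]

def geomMean (A B : Matrix n n ℝ) : Matrix n n ℝ :=
  CFC.sqrt A * CFC.sqrt ((CFC.sqrt A)⁻¹ * B * (CFC.sqrt A)⁻¹) * CFC.sqrt A

theorem posSemidef_geomMean (A B : Matrix n n ℝ) : (geomMean A B).PosSemidef :=
  (conjugate_nonneg_of_nonneg (CFC.sqrt_nonneg _) (CFC.sqrt_nonneg A)).posSemidef

theorem geomMean_mul_inv_mul_geomMean {A B : Matrix n n ℝ} (hA : A.PosDef) (hB : B.PosSemidef) :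
    geomMean A B * A⁻¹ * geomMean A B = B := by
  set s := CFC.sqrt A
  have hs : s.PosDef := hA.cfcSqrt
  have hsdet : IsUnit s.det := (isUnit_iff_isUnit_det s).mp hs.isUnit
  have hAinv : A⁻¹ = s⁻¹ * s⁻¹ := by
    rw [← mul_inv_rev, CFC.sqrt_mul_sqrt_self A hA.posSemidef.nonneg]
  have hm := CFC.sqrt_mul_sqrt_self (s⁻¹ * B * s⁻¹) (hs.inv.posSemidef_conjugate_iff.2 hB).nonneg
  set m := CFC.sqrt (s⁻¹ * B * s⁻¹)
  have h1 : s * s⁻¹ = 1 := mul_nonsing_inv _ hsdet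
  have h2 : s⁻¹ * s = 1 := nonsing_inv_mul _ hsdet
  calc s * m * s * A⁻¹ * (s * m * s) = s * m * (s * s⁻¹) * (s⁻¹ * s) * m * s := by
        rw [hAinv]; noncomm_ring
    _ = s * (m * m) * s := by rw [h1, h2]; noncomm_ring
    _ = (s * s⁻¹) * B * (s⁻¹ * s) := by rw [hm]; noncomm_ring
    _ = B := by rw [h1, h2, Matrix.one_mul, Matrix.mul_one]

end Matrix

theorem sqrt_geometric_mean_strict_mono_general {n : ℕ}
    (A B C D : Matrix (Fin n) (Fin n) ℝ)
    (hA : A.PosDef) (hD : D.PosDef)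
    (hAC : A * C = C * A) (hBD : B * D = D * B)
    (hBA : (B - A).PosDef) (hDC : (D - C).PosSemidef) :
    ∀ (hACp : (A * C).PosSemidef) (hBDp : (B * D).PosSemidef),
      (hBDp.sqrt - hACp.sqrt).PosDef := by
  intro hACp hBDp
  rw [hACp.sqrt_eq_cfcSqrt, hBDp.sqrt_eq_cfcSqrt, hBD]
  set G := geomMean D A
  have hT := cfcSqrt_mul_mul_inv_mul_cfcSqrt_mul hA.isUnit hAC hACp
  have hS := cfcSqrt_mul_mul_inv_mul_cfcSqrt_mul hD.isUnit hBD.symm (hBD ▸ hBDp)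
  have hGD : G * D⁻¹ * G = A := geomMean_mul_inv_mul_geomMean hD hA.posSemidef
  have hGA : G * A⁻¹ * G = D := mul_inv_mul_eq_of_mul_inv_mul_eq hD.isUnit hA.isUnit hGD
  have hSG : (CFC.sqrt (D * B) - G).PosDef :=
    posDef_sub_of_posDef_mul_inv_mul_sub_mul_inv_mul hD (posSemidef_geomMean D A)
      (CFC.sqrt_nonneg _).posSemidef (by rwa [hS, hGD])
  have hGT : (G - CFC.sqrt (A * C)).PosSemidef :=
    posSemidef_sub_of_posSemidef_mul_inv_mul_sub_mul_inv_mul hA (CFC.sqrt_nonneg _).posSemidef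
      (posSemidef_geomMean D A) (by rwa [hGA, hT])
  simpa using hSG.add_posSemidef hGT

/-- strict monotonicity of the geometric mean: for commuting pairs of
symmetric positive definite matrices, `B - A > 0` and `D - C ≥ 0` imply
`√(BD) - √(AC) > 0`.  (`AC` and `BD` are symmetric positive definite, hence in
particular positive semidefinite, which gives meaning to the square roots.) -/
theorem sqrt_geometric_mean_strict_mono {n : ℕ}
    (A B C D : Matrix (Fin n) (Fin n) ℝ)
    (hA : A.PosDef) (hB : B.PosDef) (hC : C.PosDef) (hD : D.PosDef)
    (hAC : A * C = C * A) (hBD : B * D = D * B)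
    (hBA : (B - A).PosDef) (hDC : (D - C).PosSemidef) :
    ∀ (hACp : (A * C).PosSemidef) (hBDp : (B * D).PosSemidef),
      (hBDp.sqrt - hACp.sqrt).PosDef :=
  sqrt_geometric_mean_strict_mono_general A B C D hA hD hAC hBD hBA hDC
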